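/- The ℚ-linear span of the set of series E(p_1,…,p_l), over all l ≥ 1 and p_1,…,p_l ≥ 0, is closed under multiplication: the product of any two series of the form C(t)^{p'_1} D C(t)^{p'_2} ⋯ D C(t)^{p'_{l'}} and C(t)^{p''_1} D C(t)^{p''_2} ⋯ D C(t)^{p''_{l''}} is again a finite ℚ-linear combination of series of the form C(t)^{p_1} D C(t)^{p_2} ⋯ D C(t)^{p_l}. -/

import Mathlib

noncomputable section

/-- The base ring `A = ℚ[R₂, R₃, …]`: the polynomial ring over `ℚ` in countably many
variables, where the variable of index `i` stands for the free cumulant `Rᵢ`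
(only the variables of index `≥ 2` are ever used). -/
abbrev A : Type := MvPolynomial ℕ ℚ

/-- The set of partitions of `n` all of whose parts are at least `2`. -/
def P2 (n : ℕ) : Finset (Nat.Partition n) :=
  Finset.univ.filter fun μ => ∀ i ∈ μ.parts, 2 ≤ i

/-- `𝓡_μ = ∏_{i≥2} ((i−1)Rᵢ)^{mᵢ(μ)}/mᵢ(μ)!`, for `m` the multiset of parts of `μ`. -/
def Rmu (m : Multiset ℕ) : A :=
  (∏ i ∈ m.toFinset, ((m.count i).factorial : ℚ))⁻¹ •
    (m.map fun i : ℕ => (MvPolynomial.C ((i : ℚ) - 1) : A) * MvPolynomial.X i).prod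

/-- `Q_i = Σ_{|μ|=i} (l(μ)−1)! 𝓡_μ`, the sum ranging over partitions of `i`
with all parts `≥ 2`. -/
def Qpol (i : ℕ) : A :=
  ∑ μ ∈ P2 i, ((μ.parts.card - 1).factorial : ℚ) • Rmu μ.parts

/-- `𝓠_μ = ∏_{i≥2} Q_i^{mᵢ(μ)}/mᵢ(μ)!`, for `m` the multiset of parts of `μ`. -/
def Qmu (m : Multiset ℕ) : A :=
  (∏ i ∈ m.toFinset, ((m.count i).factorial : ℚ))⁻¹ • (m.map Qpol).prod

/-- The power series `S(t) = Σ_{i≥2} (i−1) Rᵢ tⁱ ∈ A[[t]]`. -/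
def Sser : PowerSeries A :=
  PowerSeries.mk fun i =>
    if 2 ≤ i then (MvPolynomial.C ((i : ℚ) - 1) : A) * MvPolynomial.X i else 0

/-- `C(t) = (1 − Σ_{i≥2}(i−1)Rᵢ tⁱ)⁻¹ ∈ A[[t]]`; the inverse exists (and is computed by
`PowerSeries.invOfUnit` with unit `1`) since the constant term of `1 - S` is `1`. -/
def Cser : PowerSeries A := PowerSeries.invOfUnit (1 - Sser) 1

/-- `C(t)⁻¹ = 1 − Σ_{i≥2}(i−1)Rᵢ tⁱ`. -/
def CserInv : PowerSeries A := 1 - Sser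

/-- The operator `D = t·d/dt` on `A[[t]]`, sending `Σ aₖ tᵏ` to `Σ k·aₖ tᵏ`. -/
def Dop (F : PowerSeries A) : PowerSeries A :=
  PowerSeries.mk fun k => (k : A) * PowerSeries.coeff k F

/-- `A₁(t) = C(t)` and `A_m(t) = C(t)·(D + (m−2)) A_{m−1}(t)` for `m ≥ 2`
(the value at `0` is irrelevant). -/
def Aser : ℕ → PowerSeries A
  | 0 => 1
  | 1 => Cser
  | (m + 2) => Cser * (Dop (Aser (m + 1)) + (m : PowerSeries A) * Aser (m + 1))

/-- `P_m(t) = −A_m(t)/m!`. -/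
def Pser (m : ℕ) : PowerSeries A := (-(m.factorial : ℚ)⁻¹) • Aser m

/-- `P_λ(t) = ∏_j P_{λ_j}(t)`, for `m` the multiset of parts of `λ`. -/
def Plam (m : Multiset ℕ) : PowerSeries A := (m.map Pser).prod

/-- Evaluation of the monomial symmetric function `m_lam` at the finitely many values
given by the multiset `μ` (and `0` elsewhere):
`m_lam(x) = (∏_j m_j(lam)!)⁻¹ Σ_{φ injective} ∏_i x_{φ(i)}^{lam_i}`. -/
def msymEval (lam : Multiset ℕ) (μ : Multiset ℕ) : ℚ :=
  (∏ j ∈ lam.toFinset, ((lam.count j).factorial : ℚ))⁻¹ *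
    ∑ φ ∈ Finset.univ.filter
        (fun φ : Fin lam.toList.length → Fin μ.toList.length => Function.Injective φ),
      ∏ i, ((μ.toList.get (φ i) : ℕ) : ℚ) ^ lam.toList.get i

/-- `f : Multiset ℕ → ℚ` is (the evaluation, at the multiset of parts of a partition, of)
a symmetric function of degree at most `d` with rational coefficients: a finite `ℚ`-linear
combination of monomial symmetric functions `m_lam` over partitions `lam` with `|lam| ≤ d`. -/
def IsSymmFunc (d : ℕ) (f : Multiset ℕ → ℚ) : Prop :=
  ∃ c : Multiset ℕ →₀ ℚ,
    (∀ lam ∈ c.support, (∀ i ∈ lam, 1 ≤ i) ∧ lam.sum ≤ d) ∧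
    ∀ μ : Multiset ℕ, f μ = ∑ lam ∈ c.support, c lam * msymEval lam μ

/-- `m̂_lam(k)`: the evaluation of the monomial symmetric function `m_lam` at
`x_i = i` for `1 ≤ i ≤ k−1` and `x_i = 0` for `i ≥ k`. -/
def mhat (lam : Multiset ℕ) (k : ℕ) : ℚ :=
  msymEval lam ((Multiset.range (k - 1)).map fun i => i + 1)

/-- `Σ_{k,k+1−2g} = −(1/k)·[t^{k+1−2g}] Σ_{λ ⊢ 2g} m̂_λ(k)·P_λ(t)·C(t)⁻¹ ∈ A`:
by the theorem of Goulden and Rattan this is the homogeneous part of degree `k+1−2g`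
of the Kerov character polynomial `K_k`. -/
def SigmaGR (g k : ℕ) : A :=
  (-(k : ℚ)⁻¹) • PowerSeries.coeff (k + 1 - 2 * g)
    (∑ lam : Nat.Partition (2 * g), mhat lam.parts k • (Plam lam.parts * CserInv))

/-- The nice series of parameter `s` (paper: genus `g` with `s = 2g`) associated with `f`:
`F(t) = Σ_{k≥0} tᵏ Σ_{|μ|=k} (l(μ)+s−2)! f(μ) 𝓡_μ`. -/
def niceSeries (s : ℕ) (f : Multiset ℕ → ℚ) : PowerSeries A :=
  PowerSeries.mk fun k => ∑ μ ∈ P2 k,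
    (((μ.parts.card + s - 2).factorial : ℚ) * f μ.parts) • Rmu μ.parts

/-- The very nice series of parameter `s` (paper: genus `g` with `s = 2g`) associated with
`f`: `F(t) = Σ_{k≥0} tᵏ Σ_{|μ|=k} (s−1)^{l(μ)} f(μ) 𝓠_μ`. -/
def veryNiceSeries (s : ℕ) (f : Multiset ℕ → ℚ) : PowerSeries A :=
  PowerSeries.mk fun k => ∑ μ ∈ P2 k,
    ((((s - 1 : ℕ) : ℚ)) ^ μ.parts.card * f μ.parts) • Qmu μ.parts


/-- `E(p_1,…,p_l) = C^{p_1}·D(C^{p_2}·D(⋯ D(C^{p_l})⋯))`, each `D` acting on everything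
to its right (the value on the empty list is irrelevant). -/
def Eser : List ℕ → PowerSeries A
  | [] => 1
  | [p] => Cser ^ p
  | p :: q :: r => Cser ^ p * Dop (Eser (q :: r))

/-! The span is stable under `D` and under multiplication by powers of `C`: on a generator
`E(p :: l)` they give `E(0 :: p :: l)` and `E((s + p) :: l)`. Writing `E(p :: l) = C^p · D(E l)`,
the Leibniz rule gives `E(p :: l) · F = C^p · (D(E l · F) − E l · D F)`, so by induction on `l`
every `E l` multiplies the span into itself. -/

open PowerSeries

theorem Submodule.apply_mem_span_of_forall_mem {R M : Type*} [Semiring R] [AddCommMonoid M]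
    [Module R M] (f : M →ₗ[R] M) {s : Set M} (hs : ∀ x ∈ s, f x ∈ span R s) {x : M}
    (hx : x ∈ span R s) : f x ∈ span R s :=
  (span_le (p := (span R s).comap f)).2 hs hx

lemma Dop_eq_X_mul_derivative (F : PowerSeries A) : Dop F = X * d⁄dX A F := by
  refine PowerSeries.ext fun k => ?_
  cases k with
  | zero => simp [Dop]
  | succ k =>
    simp only [Dop, coeff_mk, coeff_succ_X_mul, coeff_derivative]
    push_cast
    ring

lemma Dop_mul (F G : PowerSeries A) : Dop (F * G) = Dop F * G + F * Dop G := by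
  simp only [Dop_eq_X_mul_derivative, Derivation.leibniz, smul_eq_mul]
  ring

def DopLinearMap : PowerSeries A →ₗ[ℚ] PowerSeries A :=
  LinearMap.mulLeft ℚ X ∘ₗ (d⁄dX A).toLinearMap.restrictScalars ℚ

lemma DopLinearMap_apply (F : PowerSeries A) : DopLinearMap F = Dop F :=
  (Dop_eq_X_mul_derivative F).symm

lemma Eser_cons_cons (p q : ℕ) (r : List ℕ) :
    Eser (p :: q :: r) = Cser ^ p * Dop (Eser (q :: r)) := rfl

lemma Eser_nil : Eser [] = Eser [0] := (pow_zero Cser).symm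

lemma Dop_Eser_cons (p : ℕ) (r : List ℕ) : Dop (Eser (p :: r)) = Eser (0 :: p :: r) := by
  rw [Eser_cons_cons, pow_zero, one_mul]

lemma Cser_pow_mul_Eser_cons (s p : ℕ) (r : List ℕ) :
    Cser ^ s * Eser (p :: r) = Eser ((s + p) :: r) := by
  cases r with
  | nil => exact (pow_add Cser s p).symm
  | cons q r => rw [Eser_cons_cons, Eser_cons_cons, pow_add, mul_assoc]

def Espan : Submodule ℚ (PowerSeries A) :=
  Submodule.span ℚ {F : PowerSeries A | ∃ l : List ℕ, l ≠ [] ∧ F = Eser l}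

lemma Eser_mem_Espan : ∀ l : List ℕ, Eser l ∈ Espan
  | [] => Eser_nil ▸ Submodule.subset_span ⟨[0], List.cons_ne_nil 0 [], rfl⟩
  | p :: r => Submodule.subset_span ⟨p :: r, List.cons_ne_nil p r, rfl⟩

lemma Dop_mem_Espan {F : PowerSeries A} (hF : F ∈ Espan) : Dop F ∈ Espan := by
  rw [← DopLinearMap_apply]
  refine Submodule.apply_mem_span_of_forall_mem _ ?_ hF
  rintro _ ⟨_ | ⟨p, r⟩, hl, rfl⟩
  · exact absurd rfl hl
  · rw [DopLinearMap_apply, Dop_Eser_cons]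
    exact Eser_mem_Espan _

lemma Cser_pow_mul_mem_Espan (s : ℕ) {F : PowerSeries A} (hF : F ∈ Espan) :
    Cser ^ s * F ∈ Espan := by
  refine Submodule.apply_mem_span_of_forall_mem (LinearMap.mulLeft ℚ (Cser ^ s)) ?_ hF
  rintro _ ⟨_ | ⟨p, r⟩, hl, rfl⟩
  · exact absurd rfl hl
  · rw [LinearMap.mulLeft_apply, Cser_pow_mul_Eser_cons]
    exact Eser_mem_Espan _

lemma Eser_mul_mem_Espan : ∀ (l : List ℕ) {F : PowerSeries A}, F ∈ Espan → Eser l * F ∈ Espan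
  | [], F, hF => by rwa [Eser, one_mul]
  | [p], F, hF => Cser_pow_mul_mem_Espan p hF
  | p :: q :: r, F, hF => by
    have leibniz : Eser (p :: q :: r) * F
        = Cser ^ p * (Dop (Eser (q :: r) * F) - Eser (q :: r) * Dop F) := by
      rw [Eser_cons_cons, Dop_mul]
      ring
    rw [leibniz, mul_sub]
    exact sub_mem
      (Cser_pow_mul_mem_Espan p (Dop_mem_Espan (Eser_mul_mem_Espan (q :: r) hF)))
      (Cser_pow_mul_mem_Espan p (Eser_mul_mem_Espan (q :: r) (Dop_mem_Espan hF)))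

theorem span_closed_under_mul_general (l₁ l₂ : List ℕ) :
    Eser l₁ * Eser l₂ ∈ Submodule.span ℚ
      {F : PowerSeries A | ∃ l : List ℕ, l ≠ [] ∧ F = Eser l} :=
  Eser_mul_mem_Espan l₁ (Eser_mem_Espan l₂)

/-- The `ℚ`-linear span of the series `E(p_1,…,p_l) = C^{p_1} D C^{p_2} ⋯ D C^{p_l}`
(over `l ≥ 1`, `p_1,…,p_l ≥ 0`) is closed under multiplication. -/
theorem span_closed_under_mul (l₁ l₂ : List ℕ) (h₁ : l₁ ≠ []) (h₂ : l₂ ≠ []) :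
    Eser l₁ * Eser l₂ ∈ Submodule.span ℚ
      {F : PowerSeries A | ∃ l : List ℕ, l ≠ [] ∧ F = Eser l} :=
  span_closed_under_mul_general l₁ l₂

end
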